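/- arXiv:0908.2493 — 3 statements merged into one kernel-verified Lean document; each statement's English description precedes it below -/
import Mathlib

section
/- For 0 < k ≤ n, the integral of n/sin θ over θ from arctan(n/k) to π/2 equals the integral of n/cos θ over θ from 0 to arctan(k/n), and is at most (n + k) · arctan(k/n). -/
open Real intervalIntegral

theorem stmt_4 (n k : ℝ) (hk : 0 < k) (hkn : k ≤ n) :
    (∫ θ in Real.arctan (n / k)..(π / 2), n / Real.sin θ)
      = (∫ θ in (0:ℝ)..Real.arctan (k / n), n / Real.cos θ) ∧
    (∫ θ in Real.arctan (n / k)..(π / 2), n / Real.sin θ)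
      ≤ (n + k) * Real.arctan (k / n) := by
  have hn : 0 < n := lt_of_lt_of_le hk hkn
  have hx : 0 < n / k := div_pos hn hk
  have harc : Real.arctan (k / n) = π / 2 - Real.arctan (n / k) := by
    rw [show k / n = (n / k)⁻¹ by rw [inv_div], Real.arctan_inv_of_pos hx]
  have ha_pos : 0 < Real.arctan (n / k) := by
    have := Real.arctan_strictMono hx
    rwa [Real.arctan_zero] at this
  have ha_lt : Real.arctan (n / k) < π / 2 := Real.arctan_lt_pi_div_two _
  -- sin θ lower bound on the interval
  have hsinlb : ∀ θ ∈ Set.Icc (Real.arctan (n / k)) (π / 2), n / (n + k) ≤ Real.sin θ := by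
    intro θ hθ
    have h1 : Real.sin (Real.arctan (n / k)) ≤ Real.sin θ := by
      apply Real.sin_le_sin_of_le_of_le_pi_div_two _ hθ.2 hθ.1
      linarith [Real.pi_pos]
    have h2 : Real.sin (Real.arctan (n / k)) = (n / k) / Real.sqrt (1 + (n / k) ^ 2) :=
      Real.sin_arctan _
    have hs : Real.sqrt (1 + (n / k) ^ 2) ≤ (n + k) / k := by
      rw [show (1 : ℝ) + (n / k) ^ 2 = ((n + k) / k) ^ 2 - 2 * n / k by
        field_simp; ring]
      calc Real.sqrt (((n + k) / k) ^ 2 - 2 * n / k) ≤ Real.sqrt (((n + k) / k) ^ 2) := by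
            apply Real.sqrt_le_sqrt
            have : 0 ≤ 2 * n / k := by positivity
            linarith
        _ = (n + k) / k := Real.sqrt_sq (by positivity)
    have hsq : 0 < Real.sqrt (1 + (n / k) ^ 2) := by positivity
    have : n / (n + k) ≤ (n / k) / ((n + k) / k) := by
      rw [div_div_div_cancel_right₀]
      exact hk.ne'
    calc n / (n + k) ≤ (n / k) / ((n + k) / k) := this
      _ ≤ (n / k) / Real.sqrt (1 + (n / k) ^ 2) := by
          apply div_le_div_of_nonneg_left (le_of_lt hx) hsq hs
      _ = Real.sin (Real.arctan (n / k)) := h2.symm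
      _ ≤ Real.sin θ := h1
  have hsinpos : ∀ θ ∈ Set.Icc (Real.arctan (n / k)) (π / 2), 0 < Real.sin θ := by
    intro θ hθ
    have := hsinlb θ hθ
    have : (0:ℝ) < n / (n + k) := by positivity
    linarith [hsinlb θ hθ]
  have hcont : ContinuousOn (fun θ => n / Real.sin θ)
      (Set.Icc (Real.arctan (n / k)) (π / 2)) := by
    apply ContinuousOn.div continuousOn_const Real.continuous_sin.continuousOn
    intro θ hθ
    exact ne_of_gt (hsinpos θ hθ)
  have hint : IntervalIntegrable (fun θ => n / Real.sin θ) MeasureTheory.volume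
      (Real.arctan (n / k)) (π / 2) := by
    apply ContinuousOn.intervalIntegrable
    rwa [Set.uIcc_of_le ha_lt.le]
  constructor
  · rw [harc]
    have := intervalIntegral.integral_comp_sub_left (a := (0:ℝ))
      (b := π / 2 - Real.arctan (n / k)) (fun x => n / Real.sin x) (π / 2)
    simp only [sub_zero, sub_sub_cancel] at this
    rw [← this]
    congr 1
    ext θ
    rw [Real.sin_pi_div_two_sub]
  · have hbound : ∀ θ ∈ Set.Icc (Real.arctan (n / k)) (π / 2),
        n / Real.sin θ ≤ n + k := by
      intro θ hθ
      rw [div_le_iff₀ (hsinpos θ hθ)]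
      have := hsinlb θ hθ
      rw [div_le_iff₀ (by positivity : (0:ℝ) < n + k)] at this
      linarith
    have := intervalIntegral.integral_mono_on ha_lt.le hint
      (_root_.intervalIntegrable_const (c := n + k)) hbound
    rw [intervalIntegral.integral_const, smul_eq_mul] at this
    calc (∫ θ in Real.arctan (n / k)..(π / 2), n / Real.sin θ)
        ≤ (π / 2 - Real.arctan (n / k)) * (n + k) := this
      _ = (n + k) * Real.arctan (k / n) := by rw [harc]; ring
end

section
/- Let 0 < k ≤ n and let c ∈ R = [0,k] × [0,n]. Suppose p₁, …, p_l are points of R, all above and to the right of c (i.e., each pᵢ − c has nonnegative coordinates), all distinct from c, with angles γ₁ ≤ γ₂ ≤ ⋯ ≤ γ_l (γᵢ the angle of segment cpᵢ with the x-axis), and suppose for each i the distance from p_{i+1} to the line through c and pᵢ (and symmetrically) is at least 1 and |cpᵢ| ≥ 1. Then l − 1 ≤ ∫_{γ₁}^{γ_l} d(o, θ, R) dθ, where o = (0,0). -/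
open Real Metric

/-- The axis-aligned rectangle `[0,k] × [0,n]` as a subset of the Euclidean plane. -/
def rect (k n : ℝ) : Set (EuclideanSpace ℝ (Fin 2)) :=
  {p | p 0 ∈ Set.Icc 0 k ∧ p 1 ∈ Set.Icc 0 n}

/-- The unit vector of angle `θ`. -/
noncomputable def dir (θ : ℝ) : EuclideanSpace ℝ (Fin 2) := WithLp.toLp 2 ![Real.cos θ, Real.sin θ]

/-- The distance from `c` to the boundary of the rectangle `[0,k] × [0,n]` along
the ray from `c` in direction `(cos θ, sin θ)`. -/
noncomputable def rayDist (c : EuclideanSpace ℝ (Fin 2)) (θ k n : ℝ) : ℝ :=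
  sSup {t : ℝ | 0 ≤ t ∧ (c + t • dir θ) ∈ rect k n}

/-! Consecutive points `pᵢ`, `pᵢ₊₁` are at distance at least 1 from each other's line through `c`,
so `min |cpᵢ| |cpᵢ₊₁| * sin (γᵢ₊₁ - γᵢ) ≥ 1`. For every `θ ∈ [γᵢ, γᵢ₊₁]` the segment from the origin
in direction `θ` of length `min |cpᵢ| |cpᵢ₊₁|` stays in `R`: its horizontal extent is at most that
of `pᵢ - c`, its vertical extent at most that of `pᵢ₊₁ - c`. Hence `d(o, ·, R)` integrates to at
least `1` over each `[γᵢ, γᵢ₊₁]`, and the `l - 1` pieces add up. -/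

@[simp] lemma dir_apply_zero (θ : ℝ) : dir θ 0 = cos θ := rfl

@[simp] lemma dir_apply_one (θ : ℝ) : dir θ 1 = sin θ := rfl

@[simp] lemma norm_dir (θ : ℝ) : ‖dir θ‖ = 1 := by
  simp [EuclideanSpace.norm_eq, Fin.sum_univ_two, cos_sq_add_sin_sq]

lemma dir_eq_cos_smul_add_sin_smul (a b : ℝ) :
    dir b = cos (b - a) • dir a + sin (b - a) • dir (a + π / 2) := by
  ext i
  fin_cases i
  · simp [cos_sub, sin_sub, cos_add_pi_div_two]
    linear_combination (-cos b) * sin_sq_add_cos_sq a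
  · simp [cos_sub, sin_sub, sin_add_pi_div_two]
    linear_combination (-sin b) * sin_sq_add_cos_sq a

lemma dist_smul_dir_foot (c : EuclideanSpace ℝ (Fin 2)) (s a b : ℝ) :
    dist (c + s • dir b) (c + (s * cos (b - a)) • dir a) = |s * sin (b - a)| := by
  rw [dist_add_left, dist_eq_norm, dir_eq_cos_smul_add_sin_smul a b]
  simp [smul_add, smul_smul, norm_smul, mul_comm]

lemma infDist_affineSpan_pair_le (c : EuclideanSpace ℝ (Fin 2)) {r : ℝ} (hr : r ≠ 0)
    (s a b : ℝ) :
    infDist (c + s • dir b) (affineSpan ℝ {c, c + r • dir a}) ≤ |s * sin (b - a)| := by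
  have hfoot : AffineMap.lineMap c (c + r • dir a) (s * cos (b - a) / r)
      = c + (s * cos (b - a)) • dir a := by
    rw [AffineMap.lineMap_apply, vsub_eq_sub, add_sub_cancel_left, smul_smul,
      div_mul_cancel₀ _ hr, vadd_eq_add, add_comm]
  calc infDist (c + s • dir b) (affineSpan ℝ {c, c + r • dir a})
      ≤ dist (c + s • dir b) (c + (s * cos (b - a)) • dir a) :=
        hfoot ▸ infDist_le_dist_of_mem (AffineMap.lineMap_mem_affineSpan_pair _ _ _)
    _ = |s * sin (b - a)| := dist_smul_dir_foot c s a b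

lemma one_le_min_mul_abs_sin (c : EuclideanSpace ℝ (Fin 2)) {ra rb : ℝ} (ha : ra ≠ 0)
    (hb : rb ≠ 0) {a b : ℝ}
    (h₁ : 1 ≤ infDist (c + rb • dir b) (affineSpan ℝ {c, c + ra • dir a}))
    (h₂ : 1 ≤ infDist (c + ra • dir a) (affineSpan ℝ {c, c + rb • dir b})) :
    1 ≤ min |ra| |rb| * |sin (b - a)| := by
  have h₁' := h₁.trans (infDist_affineSpan_pair_le c ha rb a b)
  have h₂' := h₂.trans (infDist_affineSpan_pair_le c hb ra b a)
  rw [← neg_sub, sin_neg, mul_neg, abs_neg] at h₂'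
  rw [min_mul_of_nonneg _ _ (abs_nonneg _), ← abs_mul, ← abs_mul]
  exact le_min h₂' h₁'

section rayDist

variable {k n θ : ℝ}

lemma cos_nonneg_and_sin_nonneg (hθ : θ ∈ Set.Icc 0 (π / 2)) : 0 ≤ cos θ ∧ 0 ≤ sin θ :=
  ⟨cos_nonneg_of_mem_Icc ⟨by linarith [hθ.1, pi_pos], hθ.2⟩,
    sin_nonneg_of_nonneg_of_le_pi hθ.1 (by linarith [hθ.2, pi_pos])⟩

lemma max_mul_cos_mul_sin_pos (hk : 0 < k) (hn : 0 < n) (hθ : θ ∈ Set.Icc 0 (π / 2)) :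
    0 < max (n * cos θ) (k * sin θ) := by
  obtain ⟨hcos, hsin⟩ := cos_nonneg_and_sin_nonneg hθ
  by_contra! h
  have hcos0 : cos θ = 0 := by nlinarith [le_max_left (n * cos θ) (k * sin θ)]
  have hsin0 : sin θ = 0 := by nlinarith [le_max_right (n * cos θ) (k * sin θ)]
  simpa [hcos0, hsin0] using sin_sq_add_cos_sq θ

/-- `t cos θ ≤ k ∧ t sin θ ≤ n ↔ t * max (n cos θ) (k sin θ) ≤ k n`; unlike
`min (k / cos θ) (n / sin θ)`, this formula has no junk division at the ends of `[0, π/2]`. -/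
lemma rayDist_zero_eq (hk : 0 < k) (hn : 0 < n) (hθ : θ ∈ Set.Icc 0 (π / 2)) :
    rayDist 0 θ k n = k * n / max (n * cos θ) (k * sin θ) := by
  obtain ⟨hcos, hsin⟩ := cos_nonneg_and_sin_nonneg hθ
  have hM := max_mul_cos_mul_sin_pos hk hn hθ
  suffices {t : ℝ | 0 ≤ t ∧ (0 + t • dir θ) ∈ rect k n}
      = Set.Icc 0 (k * n / max (n * cos θ) (k * sin θ)) by
    rw [rayDist, this, csSup_Icc (by positivity)]
  ext t
  simp only [rect, Set.mem_ofPred_eq, Set.mem_Icc, zero_add, PiLp.smul_apply, smul_eq_mul,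
    dir_apply_zero, dir_apply_one, le_div_iff₀ hM]
  refine and_congr_right fun ht => ?_
  rw [mul_max_of_nonneg _ _ ht, max_le_iff]
  constructor
  · rintro ⟨⟨-, h₁⟩, -, h₂⟩
    constructor <;> nlinarith
  · rintro ⟨h₁, h₂⟩
    refine ⟨⟨by positivity, ?_⟩, by positivity, ?_⟩ <;> nlinarith

lemma le_rayDist_zero {t : ℝ} (hk : 0 < k) (hn : 0 < n) (hθ : θ ∈ Set.Icc 0 (π / 2))
    (ht : 0 ≤ t) (h₁ : t * cos θ ≤ k) (h₂ : t * sin θ ≤ n) : t ≤ rayDist 0 θ k n := by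
  rw [rayDist_zero_eq hk hn hθ, le_div_iff₀ (max_mul_cos_mul_sin_pos hk hn hθ),
    mul_max_of_nonneg _ _ ht]
  exact max_le (by nlinarith) (by nlinarith)

lemma continuousOn_rayDist_zero (hk : 0 < k) (hn : 0 < n) :
    ContinuousOn (fun θ ↦ rayDist 0 θ k n) (Set.Icc 0 (π / 2)) := by
  refine ContinuousOn.congr ?_ fun θ hθ ↦ rayDist_zero_eq hk hn hθ
  exact continuousOn_const.div (by fun_prop) fun θ hθ ↦ (max_mul_cos_mul_sin_pos hk hn hθ).ne'

lemma intervalIntegrable_rayDist_zero {a b : ℝ} (hk : 0 < k) (hn : 0 < n)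
    (ha : a ∈ Set.Icc 0 (π / 2)) (hb : b ∈ Set.Icc 0 (π / 2)) :
    IntervalIntegrable (fun θ ↦ rayDist 0 θ k n) MeasureTheory.volume a b :=
  ((continuousOn_rayDist_zero hk hn).mono (Set.uIcc_subset_Icc ha hb)).intervalIntegrable

lemma mul_sub_le_integral_rayDist_zero {a b ρ : ℝ} (hk : 0 < k) (hn : 0 < n) (ha : 0 ≤ a)
    (hab : a ≤ b) (hb : b ≤ π / 2) (hρ : 0 ≤ ρ) (h₁ : ρ * cos a ≤ k) (h₂ : ρ * sin b ≤ n) :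
    ρ * (b - a) ≤ ∫ θ in a..b, rayDist 0 θ k n := by
  have hbound : ∀ θ ∈ Set.Icc a b, ρ ≤ rayDist 0 θ k n := by
    intro θ hθ
    refine le_rayDist_zero hk hn ⟨ha.trans hθ.1, hθ.2.trans hb⟩ hρ ?_ ?_
    · exact (mul_le_mul_of_nonneg_left
        (cos_le_cos_of_nonneg_of_le_pi ha (by linarith [pi_pos, hθ.2]) hθ.1) hρ).trans h₁
    · exact (mul_le_mul_of_nonneg_left
        (sin_le_sin_of_le_of_le_pi_div_two (by linarith [pi_pos, hθ.1]) hb hθ.2) hρ).trans h₂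
  have := intervalIntegral.integral_mono_on hab intervalIntegrable_const
    (intervalIntegrable_rayDist_zero hk hn ⟨ha, hab.trans hb⟩ ⟨ha.trans hab, hb⟩) hbound
  rwa [intervalIntegral.integral_const, smul_eq_mul, mul_comm] at this

end rayDist

lemma abs_mul_cos_le_and_abs_mul_sin_le {k n r γ : ℝ} {c : EuclideanSpace ℝ (Fin 2)}
    (hc : c ∈ rect k n) (hp : c + r • dir γ ∈ rect k n)
    (hquad : 0 ≤ (c + r • dir γ) 0 - c 0 ∧ 0 ≤ (c + r • dir γ) 1 - c 1)
    (hγ : γ ∈ Set.Icc 0 (π / 2)) :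
    |r| * cos γ ≤ k ∧ |r| * sin γ ≤ n := by
  obtain ⟨hcos, hsin⟩ := cos_nonneg_and_sin_nonneg hγ
  simp only [rect, Set.mem_ofPred_eq, Set.mem_Icc, PiLp.add_apply, PiLp.smul_apply, smul_eq_mul,
    dir_apply_zero, dir_apply_one, add_sub_cancel_left] at hc hp hquad
  rw [← abs_of_nonneg hcos, ← abs_of_nonneg hsin, ← abs_mul, ← abs_mul,
    abs_of_nonneg hquad.1, abs_of_nonneg hquad.2]
  constructor <;> linarith

lemma one_le_integral_rayDist_zero {k n ra rb a b : ℝ} {c : EuclideanSpace ℝ (Fin 2)}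
    (hk : 0 < k) (hn : 0 < n) (hc : c ∈ rect k n)
    (hpa : c + ra • dir a ∈ rect k n) (hpb : c + rb • dir b ∈ rect k n)
    (hqa : 0 ≤ (c + ra • dir a) 0 - c 0 ∧ 0 ≤ (c + ra • dir a) 1 - c 1)
    (hqb : 0 ≤ (c + rb • dir b) 0 - c 0 ∧ 0 ≤ (c + rb • dir b) 1 - c 1)
    (ha : a ∈ Set.Icc 0 (π / 2)) (hb : b ∈ Set.Icc 0 (π / 2)) (hab : a ≤ b)
    (hra : ra ≠ 0) (hrb : rb ≠ 0)
    (h₁ : 1 ≤ infDist (c + rb • dir b) (affineSpan ℝ {c, c + ra • dir a}))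
    (h₂ : 1 ≤ infDist (c + ra • dir a) (affineSpan ℝ {c, c + rb • dir b})) :
    1 ≤ ∫ θ in a..b, rayDist 0 θ k n := by
  have hcos := mul_le_mul_of_nonneg_right (min_le_left |ra| |rb|)
    (cos_nonneg_and_sin_nonneg ha).1
  have hsin := mul_le_mul_of_nonneg_right (min_le_right |ra| |rb|)
    (cos_nonneg_and_sin_nonneg hb).2
  calc 1 ≤ min |ra| |rb| * |sin (b - a)| := one_le_min_mul_abs_sin c hra hrb h₁ h₂
    _ ≤ min |ra| |rb| * (b - a) := by
        gcongr
        exact abs_sin_le_abs.trans (abs_of_nonneg (sub_nonneg.2 hab)).le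
    _ ≤ ∫ θ in a..b, rayDist 0 θ k n :=
        mul_sub_le_integral_rayDist_zero hk hn ha.1 hab hb.2 (by positivity)
          (hcos.trans (abs_mul_cos_le_and_abs_mul_sin_le hc hpa hqa ha).1)
          (hsin.trans (abs_mul_cos_le_and_abs_mul_sin_le hc hpb hqb hb).2)

theorem stmt_9_general (k n : ℝ) (hk : 0 < k) (hkn : k ≤ n)
    (c : EuclideanSpace ℝ (Fin 2)) (hc : c ∈ rect k n)
    (l : ℕ)
    (p : ℕ → EuclideanSpace ℝ (Fin 2)) (γ r : ℕ → ℝ)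
    (hpR : ∀ i, i < l → p i ∈ rect k n)
    (hpne : ∀ i, i < l → p i ≠ c)
    (hquad : ∀ i, i < l → 0 ≤ p i 0 - c 0 ∧ 0 ≤ p i 1 - c 1)
    (hγ : ∀ i, i < l →
      p i = c + r i • dir (γ i))
    (hγrange : ∀ i, i < l → γ i ∈ Set.Icc 0 (π / 2))
    (hγmono : ∀ i j, i ≤ j → j < l → γ i ≤ γ j)
    (hfs : ∀ i, i + 1 < l →
      1 ≤ infDist (p (i + 1))
            (affineSpan ℝ ({c, p i} : Set (EuclideanSpace ℝ (Fin 2))) : Set (EuclideanSpace ℝ (Fin 2))) ∧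
      1 ≤ infDist (p i)
            (affineSpan ℝ ({c, p (i + 1)} : Set (EuclideanSpace ℝ (Fin 2))) : Set (EuclideanSpace ℝ (Fin 2)))) :
    (l : ℝ) - 1 ≤ ∫ θ in (γ 0)..(γ (l - 1)), rayDist 0 θ k n := by
  have hn : 0 < n := hk.trans_le hkn
  have hr : ∀ i < l, r i ≠ 0 := fun i hi h ↦ hpne i hi (by rw [hγ i hi, h, zero_smul, add_zero])
  have hstep : ∀ i < l - 1, 1 ≤ ∫ θ in γ i..γ (i + 1), rayDist 0 θ k n := by
    intro i hi
    have hi₀ : i < l := by omega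
    have hi₁ : i + 1 < l := by omega
    have hfs' := hfs i hi₁
    rw [hγ i hi₀, hγ (i + 1) hi₁] at hfs'
    exact one_le_integral_rayDist_zero hk hn hc (hγ i hi₀ ▸ hpR i hi₀)
      (hγ (i + 1) hi₁ ▸ hpR (i + 1) hi₁) (hγ i hi₀ ▸ hquad i hi₀)
      (hγ (i + 1) hi₁ ▸ hquad (i + 1) hi₁) (hγrange i hi₀) (hγrange (i + 1) hi₁)
      (hγmono i (i + 1) i.le_succ hi₁) (hr i hi₀) (hr (i + 1) hi₁) hfs'.1 hfs'.2
  have hint : ∀ i < l - 1, IntervalIntegrable (fun θ ↦ rayDist 0 θ k n) MeasureTheory.volume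
      (γ i) (γ (i + 1)) := fun i hi ↦
    intervalIntegrable_rayDist_zero hk hn (hγrange i (by omega)) (hγrange (i + 1) (by omega))
  calc (l : ℝ) - 1 ≤ ∑ _i ∈ Finset.range (l - 1), (1 : ℝ) := by
        rw [Finset.sum_const, Finset.card_range, nsmul_one, sub_le_iff_le_add]
        exact_mod_cast (by omega : l ≤ l - 1 + 1)
    _ ≤ ∑ i ∈ Finset.range (l - 1), ∫ θ in γ i..γ (i + 1), rayDist 0 θ k n :=
        Finset.sum_le_sum fun i hi ↦ hstep i (Finset.mem_range.1 hi)
    _ = ∫ θ in (γ 0)..(γ (l - 1)), rayDist 0 θ k n :=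
        intervalIntegral.sum_integral_adjacent_intervals hint

theorem stmt_9 (k n : ℝ) (hk : 0 < k) (hkn : k ≤ n)
    (c : EuclideanSpace ℝ (Fin 2)) (hc : c ∈ rect k n)
    (l : ℕ) (hl : 1 ≤ l)
    (p : ℕ → EuclideanSpace ℝ (Fin 2)) (γ r : ℕ → ℝ)
    (hpR : ∀ i, i < l → p i ∈ rect k n)
    (hpne : ∀ i, i < l → p i ≠ c)
    (hquad : ∀ i, i < l → 0 ≤ p i 0 - c 0 ∧ 0 ≤ p i 1 - c 1)
    (hγ : ∀ i, i < l →
      p i = c + r i • dir (γ i))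
    (hγrange : ∀ i, i < l → γ i ∈ Set.Icc 0 (π / 2))
    (hγmono : ∀ i j, i ≤ j → j < l → γ i ≤ γ j)
    (hr1 : ∀ i, i < l → 1 ≤ dist c (p i))
    (hfs : ∀ i, i + 1 < l →
      1 ≤ infDist (p (i + 1))
            (affineSpan ℝ ({c, p i} : Set (EuclideanSpace ℝ (Fin 2))) : Set (EuclideanSpace ℝ (Fin 2))) ∧
      1 ≤ infDist (p i)
            (affineSpan ℝ ({c, p (i + 1)} : Set (EuclideanSpace ℝ (Fin 2))) : Set (EuclideanSpace ℝ (Fin 2)))) :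
    (l : ℝ) - 1 ≤ ∫ θ in (γ 0)..(γ (l - 1)), rayDist 0 θ k n :=
  stmt_9_general k n hk hkn c hc l p γ r hpR hpne hquad hγ hγrange hγmono hfs
end

section
/- Within a k × n rectangle (0 < k ≤ n integers), if a point c is joined by straight segments to q points p₁,…,p_q inside the rectangle so that the resulting straight-line drawing has minimum feature size at least 1 (every vertex is at distance at least 1 from every non-incident segment), then q ≤ C·k·(1 + log(n/k)) for some absolute constant C. -/
/-!
Measured from `c`, sort the points into dyadic annuli `2 ^ m ≤ ‖p i - c‖ < 2 ^ (m + 1)`. If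
`‖p j - c‖ ≤ ‖p i - c‖`, the point of the segment `c (p i)` at distance `‖p j - c‖` from `c` lies
within `‖p j - c‖ * ‖u j - u i‖` of `p j`, where `u` is the unit direction seen from `c`; so the
directions of the points of one annulus are `2 ^ (-m - 1)`-separated on the unit circle. As the
rectangle has width `k`, they also lie in the strip `|x| ≤ k / 2 ^ m`, so one annulus holds
`O(min (2 ^ m) k)` points. The annuli with `2 ^ m ≤ k` contribute a geometric sum `O(k)`, and the
remaining `O(log (n / k))` annuli contribute `O(k)` each.
-/

open Real Metric Finset

lemma card_le_of_le_abs_sub {ι : Type*} (s : Finset ι) (x : ι → ℝ) {a b d : ℝ}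
    (hd : 0 < d) (hab : a ≤ b) (hx : ∀ i ∈ s, x i ∈ Set.Icc a b)
    (hsep : ∀ i ∈ s, ∀ j ∈ s, i ≠ j → d ≤ |x i - x j|) :
    (#s : ℝ) ≤ (b - a) / d + 1 := by
  set cell : ι → ℕ := fun i => ⌊(x i - a) / d⌋₊
  have hmaps : Set.MapsTo cell s (range (⌊(b - a) / d⌋₊ + 1)) := fun i hi => by
    have := (hx i hi).2
    simp only [coe_range, Set.mem_Iio, Nat.lt_succ_iff, cell]
    gcongr
  have hinj : Set.InjOn cell s := by
    intro i hi j hj hij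
    by_contra hne
    have hcell : ⌊(x i - a) / d⌋ = ⌊(x j - a) / d⌋ := by
      rw [← Int.natCast_floor_eq_floor (div_nonneg (sub_nonneg.2 (hx i hi).1) hd.le),
        ← Int.natCast_floor_eq_floor (div_nonneg (sub_nonneg.2 (hx j hj).1) hd.le)]
      exact congrArg _ hij
    have hlt := Int.abs_sub_lt_one_of_floor_eq_floor hcell
    rw [← sub_div, sub_sub_sub_cancel_right, abs_div, abs_of_pos hd, div_lt_one hd] at hlt
    exact (hsep i hi j hj hne).not_gt hlt
  calc (#s : ℝ) ≤ ⌊(b - a) / d⌋₊ + 1 := by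
        exact_mod_cast (card_le_card_of_injOn cell hmaps hinj).trans_eq (card_range _)
    _ ≤ (b - a) / d + 1 := by gcongr; exact Nat.floor_le (div_nonneg (sub_nonneg.2 hab) hd.le)

lemma abs_sub_le_two_mul_abs_sub_of_sq_add_sq_eq_one {x₁ y₁ x₂ y₂ : ℝ}
    (h₁ : x₁ ^ 2 + y₁ ^ 2 = 1) (h₂ : x₂ ^ 2 + y₂ ^ 2 = 1) (hy : 1 ≤ |y₁ + y₂|) :
    |y₁ - y₂| ≤ 2 * |x₁ - x₂| := by
  have hx : |x₂ + x₁| ≤ 2 := by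
    have := abs_le_of_sq_le_sq (show x₁ ^ 2 ≤ 1 ^ 2 by nlinarith) zero_le_one
    have := abs_le_of_sq_le_sq (show x₂ ^ 2 ≤ 1 ^ 2 by nlinarith) zero_le_one
    linarith [abs_add_le x₂ x₁]
  have hprod : |y₁ - y₂| * |y₁ + y₂| = |x₁ - x₂| * |x₂ + x₁| := by
    rw [← abs_mul, ← abs_mul, show (y₁ - y₂) * (y₁ + y₂) = -((x₁ - x₂) * (x₂ + x₁)) by
      linear_combination h₁ - h₂, abs_neg]
  nlinarith [abs_nonneg (y₁ - y₂), abs_nonneg (x₁ - x₂)]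

lemma card_le_of_half_le_abs {ι : Type*} (s : Finset ι) (X Y : ι → ℝ) {w δ : ℝ}
    (hw : 0 ≤ w) (hδ : 0 < δ) (hunit : ∀ i ∈ s, X i ^ 2 + Y i ^ 2 = 1)
    (hY : ∀ i ∈ s, 1 / 2 ≤ |Y i|) (hX : ∀ i ∈ s, |X i| ≤ w)
    (hsep : ∀ i ∈ s, ∀ j ∈ s, i ≠ j → δ ^ 2 ≤ (X i - X j) ^ 2 + (Y i - Y j) ^ 2) :
    (#s : ℝ) ≤ 12 * w / δ + 2 := by
  have half : ∀ t ⊆ s, (∀ i ∈ t, ∀ j ∈ t, |Y i + Y j| = |Y i| + |Y j|) →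
      (#t : ℝ) ≤ 6 * w / δ + 1 := by
    intro t hts hsame
    have hsepX : ∀ i ∈ t, ∀ j ∈ t, i ≠ j → δ / 3 ≤ |X i - X j| := by
      intro i hi j hj hij
      have hYX := abs_sub_le_two_mul_abs_sub_of_sq_add_sq_eq_one (hunit i (hts hi))
        (hunit j (hts hj)) (by linarith [hsame i hi j hj, hY i (hts hi), hY j (hts hj)])
      have := hsep i (hts hi) j (hts hj) hij
      nlinarith [sq_abs (X i - X j), sq_abs (Y i - Y j), abs_nonneg (X i - X j),
        abs_nonneg (Y i - Y j)]
    calc (#t : ℝ) ≤ (w - -w) / (δ / 3) + 1 :=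
          card_le_of_le_abs_sub t X (by positivity) (by linarith)
            (fun i hi => abs_le.1 (hX i (hts hi))) hsepX
      _ = 6 * w / δ + 1 := by field_simp; ring
  rw [← card_filter_add_card_filter_not (fun i => 0 ≤ Y i)]
  push_cast
  have hpos := half (s.filter fun i => 0 ≤ Y i) (filter_subset _ s) fun i hi j hj =>
    (abs_add_eq_add_abs_iff _ _).2 (Or.inl ⟨(mem_filter.1 hi).2, (mem_filter.1 hj).2⟩)
  have hneg := half (s.filter fun i => ¬0 ≤ Y i) (filter_subset _ s) fun i hi j hj =>
    (abs_add_eq_add_abs_iff _ _).2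
      (Or.inr ⟨le_of_not_ge (mem_filter.1 hi).2, le_of_not_ge (mem_filter.1 hj).2⟩)
  linarith [show 12 * w / δ = 2 * (6 * w / δ) by ring]

lemma norm_sq_eq_sq_add_sq (v : EuclideanSpace ℝ (Fin 2)) : ‖v‖ ^ 2 = v 0 ^ 2 + v 1 ^ 2 := by
  rw [EuclideanSpace.real_norm_sq_eq, Fin.sum_univ_two]

/- The arcs `|y| ≥ 1/2` of the circle are graphs over the `x`-axis and the arcs `|x| ≥ 1/2`
graphs over the `y`-axis; the latter miss the strip `|x| ≤ w` when `w < 1/2`. -/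
lemma card_le_of_norm_eq_one {ι : Type*} (s : Finset ι) (u : ι → EuclideanSpace ℝ (Fin 2))
    {w δ : ℝ} (hw : 0 ≤ w) (hδ : 0 < δ) (hu : ∀ i ∈ s, ‖u i‖ = 1) (hX : ∀ i ∈ s, |u i 0| ≤ w)
    (hsep : ∀ i ∈ s, ∀ j ∈ s, i ≠ j → δ ≤ ‖u i - u j‖) :
    (#s : ℝ) ≤ 36 * w / δ + 4 := by
  have hunit : ∀ i ∈ s, u i 0 ^ 2 + u i 1 ^ 2 = 1 := fun i hi => by
    rw [← norm_sq_eq_sq_add_sq, hu i hi, one_pow]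
  have hsep' : ∀ i ∈ s, ∀ j ∈ s, i ≠ j →
      δ ^ 2 ≤ (u i 0 - u j 0) ^ 2 + (u i 1 - u j 1) ^ 2 := fun i hi j hj hij => by
    have := norm_sq_eq_sq_add_sq (u i - u j)
    simp only [PiLp.sub_apply] at this
    rw [← this]
    gcongr
    exact hsep i hi j hj hij
  rw [← card_filter_add_card_filter_not (fun i => 1 / 2 ≤ |u i 1|)]
  push_cast
  have htop := card_le_of_half_le_abs (s.filter fun i => 1 / 2 ≤ |u i 1|) (u · 0) (u · 1) hw hδ
    (fun i hi => hunit i (mem_filter.1 hi).1) (fun i hi => (mem_filter.1 hi).2)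
    (fun i hi => hX i (mem_filter.1 hi).1)
    (fun i hi j hj => hsep' i (mem_filter.1 hi).1 j (mem_filter.1 hj).1)
  have hX_side : ∀ i ∈ s.filter (fun i => ¬1 / 2 ≤ |u i 1|), 1 / 2 ≤ |u i 0| := by
    intro i hi
    simp only [mem_filter, not_le] at hi
    have := hunit i hi.1
    nlinarith [sq_abs (u i 0), sq_abs (u i 1), abs_nonneg (u i 0), abs_nonneg (u i 1)]
  have hcard_side : (#(s.filter fun i => ¬1 / 2 ≤ |u i 1|) : ℝ) ≤ 24 * w / δ + 2 := by
    rcases lt_or_ge w (1 / 2) with hw' | hw'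
    · rw [card_eq_zero.2 (filter_eq_empty_iff.2 fun i hi hi' =>
        (hX i hi).not_gt (hw'.trans_le (hX_side i (mem_filter.2 ⟨hi, hi'⟩)))), Nat.cast_zero]
      positivity
    · calc (#(s.filter fun i => ¬1 / 2 ≤ |u i 1|) : ℝ) ≤ 12 * 1 / δ + 2 :=
            card_le_of_half_le_abs _ (u · 1) (u · 0) zero_le_one hδ
              (fun i hi => by linarith [hunit i (mem_filter.1 hi).1]) hX_side
              (fun i hi => by nlinarith [hunit i (mem_filter.1 hi).1, sq_abs (u i 1)])
              (fun i hi j hj hij => by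
                linarith [hsep' i (mem_filter.1 hi).1 j (mem_filter.1 hj).1 hij])
        _ ≤ 24 * w / δ + 2 := by gcongr ?_ / δ + 2; linarith
  linarith [show 36 * w / δ = 12 * w / δ + 24 * w / δ by ring]

section Direction

variable {E : Type*} [NormedAddCommGroup E] [NormedSpace ℝ E]

noncomputable def direction (c a : E) : E := ‖a - c‖⁻¹ • (a - c)

lemma norm_direction {c a : E} (h : a ≠ c) : ‖direction c a‖ = 1 :=
  norm_smul_inv_norm (sub_ne_zero.2 h)

lemma norm_smul_direction (c a : E) : ‖a - c‖ • direction c a = a - c := by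
  rcases eq_or_ne a c with rfl | h
  · simp
  · exact smul_inv_smul₀ (norm_ne_zero_iff.2 (sub_ne_zero.2 h)) _

lemma infDist_segment_le_mul_norm_direction_sub {c a b : E} (hba : ‖b - c‖ ≤ ‖a - c‖) :
    infDist b (segment ℝ c a) ≤ ‖b - c‖ * ‖direction c b - direction c a‖ := by
  have hmem : c + (‖b - c‖ / ‖a - c‖) • (a - c) ∈ segment ℝ c a := by
    rw [segment_eq_image']
    exact ⟨_, ⟨by positivity, div_le_one_of_le₀ hba (norm_nonneg _)⟩, rfl⟩
  have hdiff : b - (c + (‖b - c‖ / ‖a - c‖) • (a - c)) =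
      ‖b - c‖ • (direction c b - direction c a) := by
    rw [smul_sub ‖b - c‖, norm_smul_direction, direction, smul_smul, ← div_eq_mul_inv]
    abel
  calc infDist b (segment ℝ c a) ≤ dist b (c + (‖b - c‖ / ‖a - c‖) • (a - c)) :=
        infDist_le_dist_of_mem hmem
    _ = ‖b - c‖ * ‖direction c b - direction c a‖ := by
      rw [dist_eq_norm, hdiff, norm_smul, norm_norm]

lemma infDist_segment_le_norm_sub (c a b : E) : infDist b (segment ℝ c a) ≤ ‖b - c‖ :=
  dist_eq_norm b c ▸ infDist_le_dist_of_mem (left_mem_segment ℝ c a)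

lemma inv_le_norm_direction_sub {c a b : E} {R : ℝ} (haR : ‖a - c‖ ≤ R) (hbR : ‖b - c‖ ≤ R)
    (hab : 1 ≤ infDist b (segment ℝ c a)) (hba : 1 ≤ infDist a (segment ℝ c b)) :
    R⁻¹ ≤ ‖direction c a - direction c b‖ := by
  wlog h : ‖b - c‖ ≤ ‖a - c‖ generalizing a b
  · rw [norm_sub_rev]
    exact this hbR haR hba hab (le_of_not_ge h)
  have hRd : 1 ≤ R * ‖direction c a - direction c b‖ := by
    rw [norm_sub_rev]
    calc 1 ≤ ‖b - c‖ * ‖direction c b - direction c a‖ := hab.trans (infDist_segment_le_mul_norm_direction_sub h)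
      _ ≤ R * ‖direction c b - direction c a‖ := by gcongr
  have hR : 0 < R := by
    by_contra! hR
    nlinarith [norm_nonneg (direction c a - direction c b)]
  rw [inv_le_iff_one_le_mul₀ hR, mul_comm]
  exact hRd

end Direction

lemma card_le_of_mem_annulus {ι : Type*} (s : Finset ι) (c : EuclideanSpace ℝ (Fin 2))
    (p : ι → EuclideanSpace ℝ (Fin 2)) {k : ℝ} (hk : 1 ≤ k) (m : ℕ)
    (hx : ∀ i ∈ s, |p i 0 - c 0| ≤ k)
    (hr : ∀ i ∈ s, 2 ^ m ≤ ‖p i - c‖ ∧ ‖p i - c‖ < 2 ^ (m + 1))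
    (hfs : ∀ i ∈ s, ∀ j ∈ s, i ≠ j → 1 ≤ infDist (p j) (segment ℝ c (p i))) :
    (#s : ℝ) ≤ 76 * min (2 ^ m) k := by
  have hne : ∀ i ∈ s, p i ≠ c := fun i hi =>
    sub_ne_zero.1 (norm_pos_iff.1 ((pow_pos two_pos m).trans_le (hr i hi).1))
  have hX : ∀ i ∈ s, |direction c (p i) 0| ≤ min 1 (k / 2 ^ m) := by
    intro i hi
    refine le_min ?_ ?_
    · calc |direction c (p i) 0| ≤ ‖direction c (p i)‖ := by
            simpa only [Real.norm_eq_abs] using PiLp.norm_apply_le (direction c (p i)) 0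
        _ = 1 := norm_direction (hne i hi)
    · calc |direction c (p i) 0| = |p i 0 - c 0| / ‖p i - c‖ := by
            simp [direction, abs_mul, div_eq_inv_mul]
        _ ≤ k / 2 ^ m := div_le_div₀ (by linarith) (hx i hi) (by positivity) (hr i hi).1
  have hcard := card_le_of_norm_eq_one s (fun i => direction c (p i))
    (le_min zero_le_one (by positivity)) (by positivity)
    (fun i hi => norm_direction (hne i hi)) hX
    (fun i hi j hj hij => inv_le_norm_direction_sub (hr i hi).2.le (hr j hj).2.le
      (hfs i hi j hj hij) (hfs j hj i hi hij.symm))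
  have hmin : 1 ≤ min ((2 : ℝ) ^ m) k := le_min (one_le_pow₀ one_le_two) hk
  have hbound : 36 * min 1 (k / 2 ^ m) / ((2 : ℝ) ^ (m + 1))⁻¹ = 72 * min (2 ^ m) k := by
    rw [div_inv_eq_mul, pow_succ, ← mul_assoc, mul_assoc 36,
      min_mul_of_nonneg _ _ (by positivity), one_mul, div_mul_cancel₀ _ (by positivity)]
    ring
  linarith

lemma sum_range_min_two_pow_add_le {k : ℕ} (hk : k ≠ 0) {N : ℕ} (hN : Nat.log 2 k < N) :
    ∑ m ∈ range N, min (2 ^ m) k + k * Nat.log 2 k ≤ k * (N + 1) := by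
  induction N, hN using Nat.le_induction with
  | base =>
    have hgeom : ∑ m ∈ range (Nat.log 2 k + 1), 2 ^ m ≤ 2 * k := by
      rw [Nat.geomSum_eq le_rfl, pow_succ]
      have := Nat.pow_log_le_self 2 hk
      omega
    have := sum_le_sum fun m (_ : m ∈ range (Nat.log 2 k + 1)) => min_le_left (2 ^ m) k
    nlinarith
  | succ N _ ih =>
    rw [sum_range_succ]
    nlinarith [min_le_right (2 ^ N) k]

lemma natLog_sub_natLog_lt_one_add_logb {b : ℕ} (n k : ℕ) (hn : n ≠ 0) (hk : k ≠ 0) :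
    (Nat.log b n : ℝ) - Nat.log b k < 1 + logb b (n / k) := by
  have hkb : logb b k < Nat.log b k + 1 := by
    have := Int.lt_floor_add_one (logb b k)
    rwa [floor_logb_natCast (Nat.cast_nonneg k), Int.log_natCast, Int.cast_natCast] at this
  rw [logb_div (by exact_mod_cast hn) (by exact_mod_cast hk)]
  linarith [natLog_le_logb n b]

lemma sum_range_min_two_pow_le {k n : ℕ} (hk : 0 < k) (hkn : k ≤ n) :
    ∑ m ∈ range (Nat.log 2 n + 2), min (2 ^ m : ℝ) k ≤ 4 * k * (1 + log (n / k)) := by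
  have hsum := sum_range_min_two_pow_add_le hk.ne' (N := Nat.log 2 n + 2)
    (by have := Nat.log_mono_right (b := 2) hkn; omega)
  have hsum' : ∑ m ∈ range (Nat.log 2 n + 2), min (2 ^ m : ℝ) k + k * Nat.log 2 k ≤
      k * (Nat.log 2 n + 3) := by
    exact_mod_cast hsum
  have hlog : 0 ≤ log ((n : ℝ) / k) :=
    log_nonneg ((one_le_div (by positivity)).2 (by exact_mod_cast hkn))
  have hlogb : logb 2 ((n : ℝ) / k) ≤ 2 * log (n / k) := by
    rw [logb, div_le_iff₀ (log_pos one_lt_two)]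
    nlinarith [log_two_gt_d9]
  have hdiff := natLog_sub_natLog_lt_one_add_logb (b := 2) n k (by omega) hk.ne'
  push_cast at hdiff
  have hk0 : (0 : ℝ) ≤ k := Nat.cast_nonneg k
  nlinarith

lemma two_pow_natLog_floor_le {r : ℝ} (hr : 1 ≤ r) : (2 : ℝ) ^ Nat.log 2 ⌊r⌋₊ ≤ r :=
  calc (2 : ℝ) ^ Nat.log 2 ⌊r⌋₊ ≤ ⌊r⌋₊ := by
        exact_mod_cast Nat.pow_log_le_self 2 (Nat.floor_pos.2 hr).ne'
    _ ≤ r := Nat.floor_le (zero_le_one.trans hr)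

lemma lt_two_pow_natLog_floor_succ (r : ℝ) : r < (2 : ℝ) ^ (Nat.log 2 ⌊r⌋₊ + 1) :=
  calc r < ⌊r⌋₊ + 1 := Nat.lt_floor_add_one r
    _ ≤ (2 : ℝ) ^ (Nat.log 2 ⌊r⌋₊ + 1) := by
        exact_mod_cast Nat.lt_pow_succ_log_self one_lt_two _

lemma natLog_floor_lt_natLog_add_two {r : ℝ} {n : ℕ} (hn : n ≠ 0) (hr : r ≤ 2 * n) :
    Nat.log 2 ⌊r⌋₊ < Nat.log 2 n + 2 := by
  have hfloor : ⌊r⌋₊ ≤ n * 2 := Nat.floor_le_of_le (by push_cast; linarith)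
  have := Nat.log_mono_right (b := 2) hfloor
  rw [Nat.log_mul_base one_lt_two hn] at this
  exact Nat.lt_succ_of_le this

lemma norm_sub_le_of_mem_rect {k n : ℝ} {x y : EuclideanSpace ℝ (Fin 2)} (hx : x ∈ rect k n)
    (hy : y ∈ rect k n) : ‖x - y‖ ≤ k + n := by
  obtain ⟨⟨hx0, hx0'⟩, hx1, hx1'⟩ := hx
  obtain ⟨⟨hy0, hy0'⟩, hy1, hy1'⟩ := hy
  have h0 := abs_sub_le_of_nonneg_of_le hx0 hx0' hy0 hy0'
  have h1 := abs_sub_le_of_nonneg_of_le hx1 hx1' hy1 hy1'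
  have hsq : ‖x - y‖ ^ 2 = (x 0 - y 0) ^ 2 + (x 1 - y 1) ^ 2 := by
    rw [norm_sq_eq_sq_add_sq, PiLp.sub_apply, PiLp.sub_apply]
  refine (pow_le_pow_iff_left₀ (norm_nonneg _) (by linarith) two_ne_zero).1 ?_
  rw [hsq]
  nlinarith [sq_abs (x 0 - y 0), sq_abs (x 1 - y 1), abs_nonneg (x 0 - y 0),
    abs_nonneg (x 1 - y 1)]

/-- Within a `k × n` rectangle, if a point `c` is joined to `q` points so that the
resulting straight-line drawing has minimum feature size at least 1, then
`q ≤ C·k·(1 + log(n/k))` for an absolute constant `C`. -/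
theorem stmt_10 :
    ∃ C : ℝ, 0 < C ∧ ∀ (k n : ℕ), 0 < k → k ≤ n →
      ∀ (q : ℕ) (c : EuclideanSpace ℝ (Fin 2)) (p : Fin q → EuclideanSpace ℝ (Fin 2)),
        c ∈ rect k n → (∀ i, p i ∈ rect k n) →
        -- every vertex is at distance at least 1 from every non-incident segment:
        (∀ i j : Fin q, i ≠ j →
          1 ≤ infDist (p j) (segment ℝ c (p i))) →
        (q : ℝ) ≤ C * k * (1 + Real.log ((n : ℝ) / k)) := by
  refine ⟨304, by norm_num, fun k n hk hkn q c p hc hp hfs => ?_⟩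
  have hk1 : (1 : ℝ) ≤ k := by exact_mod_cast hk
  have hkn' : (k : ℝ) ≤ n := by exact_mod_cast hkn
  rcases lt_or_ge q 2 with hq | hq
  · have hq1 : (q : ℝ) ≤ 1 := by exact_mod_cast Nat.lt_succ_iff.1 hq
    nlinarith [log_nonneg ((one_le_div (by positivity)).2 hkn')]
  have hr1 (i : Fin q) : 1 ≤ ‖p i - c‖ := by
    obtain ⟨j, hji⟩ := Fintype.exists_ne_of_one_lt_card (by rwa [Fintype.card_fin]) i
    exact (hfs j i hji).trans (infDist_segment_le_norm_sub c (p j) (p i))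
  set annulus : Fin q → ℕ := fun i => Nat.log 2 ⌊‖p i - c‖⌋₊
  have hannulus (i : Fin q) : annulus i ∈ range (Nat.log 2 n + 2) :=
    mem_range.2 (natLog_floor_lt_natLog_add_two (by omega)
      ((norm_sub_le_of_mem_rect (hp i) hc).trans (by linarith)))
  calc (q : ℝ) = ∑ m ∈ range (Nat.log 2 n + 2), (#{i | annulus i = m} : ℝ) := by
        exact_mod_cast (card_fin q).symm.trans (card_eq_sum_card_fiberwise fun i _ => hannulus i)
    _ ≤ ∑ m ∈ range (Nat.log 2 n + 2), 76 * min (2 ^ m : ℝ) k := by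
        refine sum_le_sum fun m _ => card_le_of_mem_annulus _ c p hk1 m
          (fun i _ => abs_sub_le_of_nonneg_of_le (hp i).1.1 (hp i).1.2 hc.1.1 hc.1.2)
          (fun i hi => ?_) (fun i _ j _ hij => hfs i j hij)
        rw [← (mem_filter.1 hi).2]
        exact ⟨two_pow_natLog_floor_le (hr1 i), lt_two_pow_natLog_floor_succ _⟩
    _ ≤ 76 * (4 * k * (1 + log (n / k))) := by
        rw [← mul_sum]
        gcongr
        exact sum_range_min_two_pow_le hk hkn
    _ = 304 * k * (1 + log (n / k)) := by ring
end
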